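/- arXiv:1704.00888 — 2 statements merged into one kernel-verified Lean document; each statement's English description precedes it below -/
import Mathlib

section
/- Consider ε_{i+1} = ε_i - l P_i ε_i, where each P_i ∈ R^{3×3} is symmetric, idempotent, and has operator norm at most 1. Then for all i ≥ k, Σ_{i=k}^{k+T} (ε_i - ε_k)^T P_i (ε_i - ε_k) ≤ (l² T(T+1)/2) Σ_{i=k}^{k+T} ε_i^T P_i ε_i. -/
open Matrix Finset

private lemma gauss_sum_real (T : ℕ) :
    ∑ m ∈ Finset.range (T + 1), (m : ℝ) = T * (T + 1) / 2 := by
  induction T with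
  | zero => simp
  | succ n ih =>
    rw [Finset.sum_range_succ, ih]
    push_cast
    ring

/-- along `ε_{i+1} = ε_i - l P_i ε_i` with each `P_i = I₃ - u_i u_iᵀ`
(symmetric, idempotent, operator norm at most 1),
`Σ_{i=k}^{k+T} (ε_i - ε_k)ᵀ P_i (ε_i - ε_k) ≤ (l² T(T+1)/2) Σ_{i=k}^{k+T} ε_iᵀ P_i ε_i`. -/
theorem drift_bound
    (u : ℕ → Fin 3 → ℝ) (hu : ∀ i, u i ⬝ᵥ u i = 1)
    (P : ℕ → Matrix (Fin 3) (Fin 3) ℝ) (hP : ∀ i, P i = 1 - vecMulVec (u i) (u i))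
    (l : ℝ) (hl : 0 < l)
    (ε : ℕ → Fin 3 → ℝ) (hrec : ∀ i, ε (i + 1) = ε i - l • (P i).mulVec (ε i))
    (T : ℕ) (hT : 1 ≤ T) (k : ℕ) :
    ∑ i ∈ Finset.Icc k (k + T), (ε i - ε k) ⬝ᵥ (P i).mulVec (ε i - ε k)
      ≤ (l ^ 2 * T * (T + 1) / 2) * ∑ i ∈ Finset.Icc k (k + T), ε i ⬝ᵥ (P i).mulVec (ε i) := by
  -- `P i` acts as `x ↦ x - (uᵢ ⬝ x) • uᵢ`
  have hmul : ∀ i (x : Fin 3 → ℝ), (P i).mulVec x = x - (u i ⬝ᵥ x) • u i := by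
    intro i x
    rw [hP]
    ext c
    simp [Matrix.sub_mulVec, Matrix.one_mulVec, Matrix.mulVec, vecMulVec_apply, dotProduct,
      Matrix.one_apply, mul_sub, Finset.sum_sub_distrib, Finset.mul_sum,
      mul_comm, mul_assoc, mul_left_comm]
  set f : ℕ → Fin 3 → ℝ := fun j => (P j).mulVec (ε j) with hf
  -- `x ⬝ P x = (P x) ⬝ (P x)` and `x ⬝ P x ≤ x ⬝ x`
  have hsym : ∀ i (x : Fin 3 → ℝ),
      x ⬝ᵥ (P i).mulVec x = ((P i).mulVec x) ⬝ᵥ ((P i).mulVec x) := by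
    intro i x
    rw [hmul]
    have h1 := hu i
    simp only [dotProduct_sub, sub_dotProduct, dotProduct_smul, smul_dotProduct,
      smul_eq_mul]
    rw [dotProduct_comm (u i) x]
    nlinarith [hu i]
  have hle : ∀ i (x : Fin 3 → ℝ), x ⬝ᵥ (P i).mulVec x ≤ x ⬝ᵥ x := by
    intro i x
    rw [hmul]
    simp only [dotProduct_sub, dotProduct_smul, smul_eq_mul]
    rw [dotProduct_comm (u i) x]
    nlinarith [sq_nonneg (x ⬝ᵥ u i)]
  have hqnn : ∀ j, 0 ≤ ε j ⬝ᵥ (P j).mulVec (ε j) := by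
    intro j
    rw [hsym]
    exact Finset.sum_nonneg fun c _ => mul_self_nonneg _
  -- the recursion summed up
  have key : ∀ d : ℕ, ε (k + d) = ε k - l • ∑ j ∈ Finset.Ico k (k + d), f j := by
    intro d
    induction d with
    | zero => simp
    | succ n ih =>
      have h1 : k + (n + 1) = (k + n) + 1 := rfl
      rw [h1, hrec]
      have hfe : (P (k + n)).mulVec (ε (k + n)) = f (k + n) := rfl
      rw [hfe, ih, Finset.sum_Ico_succ_top (Nat.le_add_right k n), smul_add]
      abel
  set S := ∑ i ∈ Finset.Icc k (k + T), ε i ⬝ᵥ (P i).mulVec (ε i) with hS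
  have hSnn : 0 ≤ S := Finset.sum_nonneg fun j _ => hqnn j
  -- pointwise bound
  have hpt : ∀ i ∈ Finset.Icc k (k + T),
      (ε i - ε k) ⬝ᵥ (P i).mulVec (ε i - ε k) ≤ l ^ 2 * (((i : ℝ) - k) * S) := by
    intro i hi
    rw [Finset.mem_Icc] at hi
    obtain ⟨hki, hik⟩ := hi
    have hdiff : ε i - ε k = (-l) • ∑ j ∈ Finset.Ico k i, f j := by
      have := key (i - k)
      rw [Nat.add_sub_cancel' hki] at this
      rw [this, neg_smul]
      abel
    calc (ε i - ε k) ⬝ᵥ (P i).mulVec (ε i - ε k)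
        ≤ (ε i - ε k) ⬝ᵥ (ε i - ε k) := hle i _
      _ = l ^ 2 * ((∑ j ∈ Finset.Ico k i, f j) ⬝ᵥ (∑ j ∈ Finset.Ico k i, f j)) := by
          rw [hdiff, smul_dotProduct, dotProduct_smul]
          simp only [smul_eq_mul]
          ring
      _ ≤ l ^ 2 * (((i : ℝ) - k) * S) := by
          apply mul_le_mul_of_nonneg_left _ (sq_nonneg l)
          -- Cauchy–Schwarz coordinatewise
          have cs : (∑ j ∈ Finset.Ico k i, f j) ⬝ᵥ (∑ j ∈ Finset.Ico k i, f j)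
              ≤ ((Finset.Ico k i).card : ℝ) * ∑ j ∈ Finset.Ico k i, f j ⬝ᵥ f j := by
            have expand1 : (∑ j ∈ Finset.Ico k i, f j) ⬝ᵥ (∑ j ∈ Finset.Ico k i, f j)
                = ∑ c : Fin 3, (∑ j ∈ Finset.Ico k i, f j c) ^ 2 := by
              simp [dotProduct, Finset.sum_apply, sq]
            have expand2 : ∑ j ∈ Finset.Ico k i, f j ⬝ᵥ f j
                = ∑ c : Fin 3, ∑ j ∈ Finset.Ico k i, (f j c) ^ 2 := by
              rw [Finset.sum_comm]
              simp [dotProduct, sq]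
            rw [expand1, expand2, Finset.mul_sum]
            apply Finset.sum_le_sum
            intro c _
            exact_mod_cast sq_sum_le_card_mul_sum_sq (s := Finset.Ico k i) (f := fun j => f j c)
          have hsub : ∑ j ∈ Finset.Ico k i, f j ⬝ᵥ f j ≤ S := by
            rw [hS]
            have hfq : ∀ j, f j ⬝ᵥ f j = ε j ⬝ᵥ (P j).mulVec (ε j) := fun j => (hsym j _).symm
            simp only [hfq]
            apply Finset.sum_le_sum_of_subset_of_nonneg
            · intro x hx
              rw [Finset.mem_Ico] at hx
              rw [Finset.mem_Icc]
              exact ⟨hx.1, le_trans (Nat.le_of_lt_succ (Nat.lt_succ_of_lt hx.2)) hik⟩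
            · intro j _ _; exact hqnn j
          have hcard : ((Finset.Ico k i).card : ℝ) = (i : ℝ) - k := by
            rw [Nat.card_Ico, Nat.cast_sub hki]
          calc (∑ j ∈ Finset.Ico k i, f j) ⬝ᵥ (∑ j ∈ Finset.Ico k i, f j)
              ≤ ((Finset.Ico k i).card : ℝ) * ∑ j ∈ Finset.Ico k i, f j ⬝ᵥ f j := cs
            _ ≤ ((Finset.Ico k i).card : ℝ) * S := by
                apply mul_le_mul_of_nonneg_left hsub (by positivity)
            _ = ((i : ℝ) - k) * S := by rw [hcard]
  calc ∑ i ∈ Finset.Icc k (k + T), (ε i - ε k) ⬝ᵥ (P i).mulVec (ε i - ε k)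
      ≤ ∑ i ∈ Finset.Icc k (k + T), l ^ 2 * (((i : ℝ) - k) * S) :=
        Finset.sum_le_sum hpt
    _ = (l ^ 2 * T * (T + 1) / 2) * S := by
        have hg : ∑ i ∈ Finset.Icc k (k + T), ((i : ℝ) - k) = T * (T + 1) / 2 := by
          rw [← Finset.Ico_add_one_right_eq_Icc, Finset.sum_Ico_eq_sum_range]
          have h2 : k + T + 1 - k = T + 1 := by omega
          rw [h2, ← gauss_sum_real T]
          apply Finset.sum_congr rfl
          intro m _
          push_cast
          ring
        have h3 : ∑ i ∈ Finset.Icc k (k + T), l ^ 2 * (((i : ℝ) - k) * S)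
            = (∑ i ∈ Finset.Icc k (k + T), ((i : ℝ) - k)) * (l ^ 2 * S) := by
          rw [Finset.sum_mul]
          apply Finset.sum_congr rfl
          intro i _
          ring
        rw [h3, hg]
        ring
end

section
/- Let ε_{k+1} = ε_k - l P_k ε_k with P_k = I_3 - u_k u_k^T, u_k unit vectors, 0 < l < 2, and suppose the persistency condition (1/(T+1)) Σ_{i=k}^{k+T} P_i ⪰ β I_3 holds for all k with T ≥ 1, β > 0. Then L_k = ‖ε_k‖² satisfies L_{k+1+T} ≤ ᾱ L_k for all k, where ᾱ = 1 - β(T+1)(2l - l²)/(2 + l² T(T+1)). -/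
open Matrix Finset

/-! Each `P k` is an orthogonal projection, so one step lowers `L` by exactly
`(2l - l²) ‖P_k ε_k‖²`, and the horizon `k, …, k + T` lowers it by `(2l - l²) S` with
`S = Σ_{i ≤ T} ‖P_{k+i} ε_{k+i}‖²`. Persistency gives `β (T + 1) L_k ≤ Σ_{i ≤ T} ‖P_{k+i} ε_k‖²`.
Writing `ε_k = ε_{k+i} + l Σ_{j < i} P_{k+j} ε_{k+j}`, the bound `‖a + b‖² ≤ 2‖a‖² + 2‖b‖²` and
Cauchy–Schwarz estimate the `i`-th term by `2 ‖P_{k+i} ε_{k+i}‖² + 2 l² i S`; summing over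
`i ≤ T` yields `β (T + 1) L_k ≤ (2 + l² T (T + 1)) S`. -/

variable {n : Type*} [Fintype n]

section OrderedRing

variable {R : Type*} [CommRing R] [LinearOrder R] [IsStrictOrderedRing R]

lemma dotProduct_self_nonneg (x : n → R) : 0 ≤ x ⬝ᵥ x :=
  sum_nonneg fun i _ => mul_self_nonneg (x i)

lemma add_dotProduct_self_le (a b : n → R) :
    (a + b) ⬝ᵥ (a + b) ≤ 2 * (a ⬝ᵥ a) + 2 * (b ⬝ᵥ b) := by
  have h := dotProduct_self_nonneg (a - b)
  simp only [dotProduct_sub, sub_dotProduct, dotProduct_add, add_dotProduct,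
    dotProduct_comm b a] at h ⊢
  linarith

lemma sum_dotProduct_self_le {ι : Type*} (s : Finset ι) (v : ι → n → R) :
    (∑ j ∈ s, v j) ⬝ᵥ (∑ j ∈ s, v j) ≤ #s * ∑ j ∈ s, v j ⬝ᵥ v j := by
  calc (∑ j ∈ s, v j) ⬝ᵥ (∑ j ∈ s, v j)
      = ∑ a, (∑ j ∈ s, v j a) ^ 2 := by simp [dotProduct, Finset.sum_apply, sq]
    _ ≤ ∑ a, #s * ∑ j ∈ s, v j a ^ 2 := sum_le_sum fun a _ => sq_sum_le_card_mul_sum_sq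
    _ = #s * ∑ j ∈ s, v j ⬝ᵥ v j := by
      rw [← mul_sum, sum_comm]
      simp [dotProduct, sq]

end OrderedRing

namespace IsStarProjection

variable {P : Matrix n n ℝ}

lemma mulVec_dotProduct_mulVec (hP : IsStarProjection P) (x : n → ℝ) :
    P *ᵥ x ⬝ᵥ P *ᵥ x = x ⬝ᵥ P *ᵥ x := by
  have hPt : Pᵀ = P := (conjTranspose_eq_transpose_of_trivial P).symm.trans hP.isSelfAdjoint
  rw [dotProduct_mulVec, ← mulVec_transpose, hPt, mulVec_mulVec, hP.isIdempotentElem.eq,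
    dotProduct_comm]

lemma mulVec_dotProduct_self_le (hP : IsStarProjection P) (x : n → ℝ) :
    P *ᵥ x ⬝ᵥ P *ᵥ x ≤ x ⬝ᵥ x := by
  have h := dotProduct_self_nonneg (x - P *ᵥ x)
  simp only [dotProduct_sub, sub_dotProduct, dotProduct_comm (P *ᵥ x) x,
    hP.mulVec_dotProduct_mulVec] at h
  have := hP.mulVec_dotProduct_mulVec x
  linarith

end IsStarProjection

lemma isStarProjection_one_sub_vecMulVec_self [DecidableEq n] {u : n → ℝ} (hu : u ⬝ᵥ u = 1) :
    IsStarProjection (1 - vecMulVec u u) := by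
  refine IsStarProjection.one_sub ⟨?_, ?_⟩
  · rw [IsIdempotentElem, vecMulVec_mul_vecMulVec, hu, one_smul]
  · simp [IsSelfAdjoint, star_eq_conjTranspose]

lemma Matrix.PosSemidef.mul_dotProduct_self_le_dotProduct_mulVec [DecidableEq n]
    {A : Matrix n n ℝ} {β : ℝ} (h : (A - β • 1).PosSemidef) (x : n → ℝ) :
    β * (x ⬝ᵥ x) ≤ x ⬝ᵥ A *ᵥ x := by
  have := h.dotProduct_mulVec_nonneg x
  simp only [star_trivial, sub_mulVec, smul_mulVec, one_mulVec, dotProduct_sub,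
    dotProduct_smul, smul_eq_mul] at this
  linarith

lemma mul_dotProduct_self_le_sum_of_posSemidef [DecidableEq n] {P : ℕ → Matrix n n ℝ}
    {β : ℝ} {k T : ℕ}
    (h : (((T : ℝ) + 1)⁻¹ • ∑ i ∈ Icc k (k + T), P i - β • (1 : Matrix n n ℝ)).PosSemidef)
    (x : n → ℝ) :
    β * (T + 1) * (x ⬝ᵥ x) ≤ ∑ i ∈ range (T + 1), x ⬝ᵥ P (k + i) *ᵥ x := by
  have h' := h.mul_dotProduct_self_le_dotProduct_mulVec x
  rw [smul_mulVec, sum_mulVec, dotProduct_smul, dotProduct_sum, smul_eq_mul,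
    ← Ico_add_one_right_eq_Icc, sum_Ico_eq_sum_range, show k + T + 1 - k = T + 1 by omega,
    le_inv_mul_iff₀ (by positivity)] at h'
  linarith

section Iteration

variable {P : ℕ → Matrix n n ℝ} {l : ℝ} {ε : ℕ → n → ℝ}

lemma eq_sub_smul_sum_mulVec_of_rec (hrec : ∀ k, ε (k + 1) = ε k - l • P k *ᵥ ε k) (m : ℕ) :
    ε m = ε 0 - l • ∑ i ∈ range m, P i *ᵥ ε i := by
  induction m with
  | zero => simp
  | succ m ih => rw [hrec, sum_range_succ, smul_add, ← sub_sub, ← ih]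

lemma dotProduct_self_eq_sub_sum_of_rec (hP : ∀ k, IsStarProjection (P k))
    (hrec : ∀ k, ε (k + 1) = ε k - l • P k *ᵥ ε k) (m : ℕ) :
    ε m ⬝ᵥ ε m = ε 0 ⬝ᵥ ε 0 - (2 * l - l ^ 2) * ∑ i ∈ range m, ε i ⬝ᵥ P i *ᵥ ε i := by
  induction m with
  | zero => simp
  | succ m ih =>
    have hm := (hP m).mulVec_dotProduct_mulVec (ε m)
    rw [hrec, sum_range_succ]
    simp only [dotProduct_sub, sub_dotProduct, dotProduct_smul, smul_dotProduct, smul_eq_mul,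
      dotProduct_comm (P m *ᵥ ε m) (ε m), hm]
    linear_combination ih

lemma dotProduct_mulVec_zero_le_of_rec (hP : ∀ k, IsStarProjection (P k))
    (hrec : ∀ k, ε (k + 1) = ε k - l • P k *ᵥ ε k) (i : ℕ) :
    ε 0 ⬝ᵥ P i *ᵥ ε 0 ≤
      2 * (ε i ⬝ᵥ P i *ᵥ ε i) + 2 * l ^ 2 * i * ∑ j ∈ range i, ε j ⬝ᵥ P j *ᵥ ε j := by
  set w := ∑ j ∈ range i, P j *ᵥ ε j
  have hdrift : P i *ᵥ ε 0 = P i *ᵥ ε i + l • P i *ᵥ w := by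
    rw [eq_sub_smul_sum_mulVec_of_rec hrec i, mulVec_sub, mulVec_smul]; abel
  have hw : P i *ᵥ w ⬝ᵥ P i *ᵥ w ≤ i * ∑ j ∈ range i, ε j ⬝ᵥ P j *ᵥ ε j :=
    calc P i *ᵥ w ⬝ᵥ P i *ᵥ w ≤ w ⬝ᵥ w := (hP i).mulVec_dotProduct_self_le w
      _ ≤ #(range i) * ∑ j ∈ range i, P j *ᵥ ε j ⬝ᵥ P j *ᵥ ε j := sum_dotProduct_self_le _ _
      _ = i * ∑ j ∈ range i, ε j ⬝ᵥ P j *ᵥ ε j := by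
        simp only [card_range, fun j => (hP j).mulVec_dotProduct_mulVec]
  calc ε 0 ⬝ᵥ P i *ᵥ ε 0 = P i *ᵥ ε 0 ⬝ᵥ P i *ᵥ ε 0 := ((hP i).mulVec_dotProduct_mulVec _).symm
    _ ≤ 2 * (P i *ᵥ ε i ⬝ᵥ P i *ᵥ ε i) + 2 * (l • P i *ᵥ w ⬝ᵥ l • P i *ᵥ w) := by
      rw [hdrift]; exact add_dotProduct_self_le _ _
    _ = 2 * (ε i ⬝ᵥ P i *ᵥ ε i) + 2 * l ^ 2 * (P i *ᵥ w ⬝ᵥ P i *ᵥ w) := by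
      simp only [(hP i).mulVec_dotProduct_mulVec, dotProduct_smul, smul_dotProduct, smul_eq_mul]
      ring
    _ ≤ _ := by rw [mul_assoc _ (i : ℝ)]; gcongr

lemma sum_dotProduct_mulVec_zero_le_of_rec (hP : ∀ k, IsStarProjection (P k))
    (hrec : ∀ k, ε (k + 1) = ε k - l • P k *ᵥ ε k) (T : ℕ) :
    ∑ i ∈ range (T + 1), ε 0 ⬝ᵥ P i *ᵥ ε 0 ≤
      (2 + l ^ 2 * T * (T + 1)) * ∑ i ∈ range (T + 1), ε i ⬝ᵥ P i *ᵥ ε i := by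
  set S := ∑ i ∈ range (T + 1), ε i ⬝ᵥ P i *ᵥ ε i
  have hq : ∀ i, 0 ≤ ε i ⬝ᵥ P i *ᵥ ε i := fun i => by
    rw [← (hP i).mulVec_dotProduct_mulVec]; exact dotProduct_self_nonneg _
  have hpartial : ∀ i ∈ range (T + 1), ∑ j ∈ range i, ε j ⬝ᵥ P j *ᵥ ε j ≤ S := fun i hi =>
    sum_le_sum_of_subset_of_nonneg (range_mono (mem_range.1 hi).le) fun j _ _ => hq j
  have hgauss : ∑ i ∈ range (T + 1), (i : ℝ) = T * (T + 1) / 2 := by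
    have := sum_range_id_mul_two (T + 1)
    rw [Nat.add_sub_cancel] at this
    rw [eq_div_iff two_ne_zero, ← Nat.cast_sum]
    exact_mod_cast this.trans (mul_comm _ _)
  calc ∑ i ∈ range (T + 1), ε 0 ⬝ᵥ P i *ᵥ ε 0
      ≤ ∑ i ∈ range (T + 1), (2 * (ε i ⬝ᵥ P i *ᵥ ε i) + 2 * l ^ 2 * i * S) := by
        refine sum_le_sum fun i hi => (dotProduct_mulVec_zero_le_of_rec hP hrec i).trans ?_
        gcongr
        exact hpartial i hi
    _ = (2 + l ^ 2 * T * (T + 1)) * S := by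
        rw [sum_add_distrib, ← mul_sum, ← sum_mul, ← mul_sum, hgauss]
        ring

lemma dotProduct_self_le_of_persistent {β : ℝ} (hP : ∀ k, IsStarProjection (P k))
    (hrec : ∀ k, ε (k + 1) = ε k - l • P k *ᵥ ε k)
    (hl0 : 0 ≤ l) (hl2 : l ≤ 2) {T : ℕ}
    (hpe : β * (T + 1) * (ε 0 ⬝ᵥ ε 0) ≤ ∑ i ∈ range (T + 1), ε 0 ⬝ᵥ P i *ᵥ ε 0) :
    ε (T + 1) ⬝ᵥ ε (T + 1) ≤
      (1 - β * (T + 1) * (2 * l - l ^ 2) / (2 + l ^ 2 * T * (T + 1))) * (ε 0 ⬝ᵥ ε 0) := by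
  set S := ∑ i ∈ range (T + 1), ε i ⬝ᵥ P i *ᵥ ε i
  have hD : (0 : ℝ) < 2 + l ^ 2 * T * (T + 1) := by positivity
  have hc : 0 ≤ 2 * l - l ^ 2 := by nlinarith
  have hS : β * (T + 1) * (ε 0 ⬝ᵥ ε 0) / (2 + l ^ 2 * T * (T + 1)) ≤ S :=
    (div_le_iff₀' hD).2 (hpe.trans (sum_dotProduct_mulVec_zero_le_of_rec hP hrec T))
  rw [dotProduct_self_eq_sub_sum_of_rec hP hrec]
  linear_combination mul_le_mul_of_nonneg_left hS hc

end Iteration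

theorem lyapunov_horizon_contraction_general
    (u : ℕ → Fin 3 → ℝ) (hu : ∀ k, u k ⬝ᵥ u k = 1)
    (P : ℕ → Matrix (Fin 3) (Fin 3) ℝ) (hP : ∀ k, P k = 1 - vecMulVec (u k) (u k))
    (l : ℝ) (hl0 : 0 < l) (hl2 : l < 2)
    (T : ℕ) (β : ℝ)
    (hpe : ∀ k : ℕ,
      (((T : ℝ) + 1)⁻¹ • ∑ i ∈ Finset.Icc k (k + T), P i
        - β • (1 : Matrix (Fin 3) (Fin 3) ℝ)).PosSemidef)
    (ε : ℕ → Fin 3 → ℝ) (hrec : ∀ k, ε (k + 1) = ε k - l • (P k).mulVec (ε k))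
    (L : ℕ → ℝ) (hL : ∀ k, L k = ε k ⬝ᵥ ε k)
    (α : ℝ) (hα : α = 1 - β * (T + 1) * (2 * l - l ^ 2) / (2 + l ^ 2 * T * (T + 1))) :
    ∀ k, L (k + 1 + T) ≤ α * L k := by
  intro k
  have hproj : ∀ i, IsStarProjection (P i) := fun i =>
    hP i ▸ isStarProjection_one_sub_vecMulVec_self (hu i)
  have hpers := mul_dotProduct_self_le_sum_of_posSemidef (hpe k) (ε k)
  have hcontract := dotProduct_self_le_of_persistent (P := fun i => P (k + i))
    (ε := fun i => ε (k + i)) (fun i => hproj (k + i)) (fun i => hrec (k + i)) hl0.le hl2.le hpers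
  rwa [hL, hL, hα, add_assoc, add_comm 1]

/-- along `ε_{k+1} = ε_k - l P_k ε_k` with `P_k = I₃ - u_k u_kᵀ`, unit
vectors `u_k`, `0 < l < 2`, and persistency `(1/(T+1)) Σ_{i=k}^{k+T} P_i ⪰ β I₃` with
`T ≥ 1`, `β > 0`, the Lyapunov function `L_k = ‖ε_k‖²` satisfies `L_{k+1+T} ≤ ᾱ L_k`
where `ᾱ = 1 - β(T+1)(2l - l²)/(2 + l² T(T+1))`. -/
theorem lyapunov_horizon_contraction
    (u : ℕ → Fin 3 → ℝ) (hu : ∀ k, u k ⬝ᵥ u k = 1)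
    (P : ℕ → Matrix (Fin 3) (Fin 3) ℝ) (hP : ∀ k, P k = 1 - vecMulVec (u k) (u k))
    (l : ℝ) (hl0 : 0 < l) (hl2 : l < 2)
    (T : ℕ) (hT : 1 ≤ T) (β : ℝ) (hβ : 0 < β)
    (hpe : ∀ k : ℕ,
      (((T : ℝ) + 1)⁻¹ • ∑ i ∈ Finset.Icc k (k + T), P i
        - β • (1 : Matrix (Fin 3) (Fin 3) ℝ)).PosSemidef)
    (ε : ℕ → Fin 3 → ℝ) (hrec : ∀ k, ε (k + 1) = ε k - l • (P k).mulVec (ε k))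
    (L : ℕ → ℝ) (hL : ∀ k, L k = ε k ⬝ᵥ ε k)
    (α : ℝ) (hα : α = 1 - β * (T + 1) * (2 * l - l ^ 2) / (2 + l ^ 2 * T * (T + 1))) :
    ∀ k, L (k + 1 + T) ≤ α * L k :=
  lyapunov_horizon_contraction_general u hu P hP l hl0 hl2 T β hpe ε hrec L hL α hα
end
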